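/- Let β, α be real numbers with 0 < β ≤ 1/(2√2 + 2) and 0 < α ≤ (1/2 − β)/(2√2). Then for every c ∈ ℝ, with λ(c) = |c| + √(c² + 1), the inequality λ(c)/2 − 2α − β·λ(c) − |c|/2 ≥ 0 holds. -/
import Mathlib


theorem stmt_3 (α β : ℝ) (hβ0 : 0 < β) (hβ : β ≤ 1 / (2 * Real.sqrt 2 + 2))
    (hα0 : 0 < α) (hα : α ≤ (1 / 2 - β) / (2 * Real.sqrt 2)) (c : ℝ) :
    (|c| + Real.sqrt (c ^ 2 + 1)) / 2 - 2 * α - β * (|c| + Real.sqrt (c ^ 2 + 1))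
      - |c| / 2 ≥ 0 := by
  set s := Real.sqrt 2 with hs
  have hs0 : (0:ℝ) < s := Real.sqrt_pos.mpr (by norm_num)
  have hs2 : s ^ 2 = 2 := Real.sq_sqrt (by norm_num)
  set t := Real.sqrt (c ^ 2 + 1) with ht
  have ht0 : 0 ≤ t := Real.sqrt_nonneg _
  have ht2 : t ^ 2 = c ^ 2 + 1 := Real.sq_sqrt (by positivity)
  have hts : |c| + 1 ≤ t * s := by
    have h1 : (|c| + 1) ^ 2 ≤ (t * s) ^ 2 := by
      have := sq_abs c
      nlinarith [sq_nonneg (|c| - 1)]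
    have h2 : 0 ≤ t * s := by positivity
    nlinarith
  have hβ' : β * (2 * s + 2) ≤ 1 := by
    have := (le_div_iff₀ (by positivity : (0:ℝ) < 2*s+2)).mp hβ
    linarith
  have hα' : α * (2 * s) ≤ 1 / 2 - β := by
    have := (le_div_iff₀ (by positivity : (0:ℝ) < 2*s)).mp hα
    linarith
  have hc : 0 ≤ |c| := abs_nonneg c
  nlinarith [mul_le_mul_of_nonneg_left hts (by nlinarith : (0:ℝ) ≤ 1/2 - β), mul_nonneg hc (by nlinarith : (0:ℝ) ≤ 1 - β * (2*s+2))]
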